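/- Let φ : C → D be a quotient morphism of finite categories. The congruence on C induced by φ is minimal among nontrivial congruences on C if and only if the kernel congruence of the induced monoid homomorphism φ_cd : C^cd → D^cd is minimal among nontrivial monoid congruences on C^cd. -/
import Mathlib


/-- A finite category presented by its set of arrows with a partial composition. -/
structure FinCat (Obj : Type) where
  Arr : Type
  src : Arr → Obj
  tgt : Arr → Obj
  id : Obj → Arr
  comp : (f g : Arr) → tgt f = src g → Arr
  src_id : ∀ a, src (id a) = a
  tgt_id : ∀ a, tgt (id a) = a
  src_comp : ∀ f g h, src (comp f g h) = src f
  tgt_comp : ∀ f g h, tgt (comp f g h) = tgt g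
  id_comp : ∀ (f : Arr) (h : tgt (id (src f)) = src f), comp (id (src f)) f h = f
  comp_id : ∀ (f : Arr) (h : tgt f = src (id (tgt f))), comp f (id (tgt f)) h = f
  assoc : ∀ (f g k : Arr) (h1 : tgt f = src g) (h2 : tgt g = src k) h3 h4,
    comp (comp f g h1) k h3 = comp f (comp g k h2) h4

/-- The underlying set of the consolidation monoid `C^cd`:
arrows of `C` together with an adjoined zero and identity. -/
inductive Cd {Obj : Type} (C : FinCat Obj) where
  | zero : Cd C
  | one : Cd C
  | arr : C.Arr → Cd C

variable {Obj : Type} [DecidableEq Obj]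

/-- Multiplication of the consolidation: composition where defined, `0` otherwise,
with `1` an adjoined identity and `0` absorbing. -/
def cdMul (C : FinCat Obj) : Cd C → Cd C → Cd C
  | .one, x => x
  | .zero, _ => .zero
  | x, .one => x
  | _, .zero => .zero
  | .arr f, .arr g => if h : C.tgt f = C.src g then .arr (C.comp f g h) else .zero

theorem cdMul_zero (C : FinCat Obj) (x : Cd C) : cdMul C x Cd.zero = Cd.zero := by
  cases x <;> rfl
theorem cdZero_mul (C : FinCat Obj) (x : Cd C) : cdMul C Cd.zero x = Cd.zero := by
  cases x <;> rfl
theorem cdMul_one (C : FinCat Obj) (x : Cd C) : cdMul C x Cd.one = x := by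
  cases x <;> rfl
theorem cdOne_mul (C : FinCat Obj) (x : Cd C) : cdMul C Cd.one x = x := by
  cases x <;> rfl

theorem cdMul_assoc (C : FinCat Obj) (x y z : Cd C) :
    cdMul C (cdMul C x y) z = cdMul C x (cdMul C y z) := by
  cases x <;> cases y <;> cases z <;>
    (try simp only [cdMul_zero, cdZero_mul, cdMul_one, cdOne_mul]) <;> (try rfl)
  case arr.arr.arr f g k =>
    by_cases h1 : C.tgt f = C.src g
    · by_cases h2 : C.tgt g = C.src k
      · show cdMul C (dite _ _ _) _ = cdMul C _ (dite _ _ _)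
        rw [dif_pos h1, dif_pos h2]
        show dite _ _ _ = dite _ _ _
        rw [dif_pos (show C.tgt (C.comp f g h1) = C.src k by rw [C.tgt_comp]; exact h2),
            dif_pos (show C.tgt f = C.src (C.comp g k h2) by rw [C.src_comp]; exact h1)]
        exact congrArg Cd.arr (C.assoc f g k h1 h2 _ _)
      · show cdMul C (dite _ _ _) _ = cdMul C _ (dite _ _ _)
        rw [dif_pos h1, dif_neg h2]
        show dite _ _ _ = Cd.zero
        rw [dif_neg (show ¬ C.tgt (C.comp f g h1) = C.src k by rw [C.tgt_comp]; exact h2)]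
    · show cdMul C (dite _ _ _) _ = cdMul C _ (cdMul C _ _)
      rw [dif_neg h1]
      by_cases h2 : C.tgt g = C.src k
      · show Cd.zero = cdMul C _ (dite _ _ _)
        rw [dif_pos h2]
        show Cd.zero = dite _ _ _
        rw [dif_neg (show ¬ C.tgt f = C.src (C.comp g k h2) by rw [C.src_comp]; exact h1)]
      · show Cd.zero = cdMul C _ (dite _ _ _)
        rw [dif_neg h2, cdMul_zero]

instance cdMonoid (C : FinCat Obj) : Monoid (Cd C) where
  mul := cdMul C
  one := .one
  one_mul x := by cases x <;> rfl
  mul_one x := by cases x <;> rfl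
  mul_assoc := cdMul_assoc C

/-- Green's R-equivalence in a monoid. -/
def RE {M : Type} [Monoid M] (s t : M) : Prop := (∃ a, s * a = t) ∧ (∃ a, t * a = s)
/-- Green's L-equivalence in a monoid. -/
def LE' {M : Type} [Monoid M] (s t : M) : Prop := (∃ a, a * s = t) ∧ (∃ a, a * t = s)
/-- Green's H-equivalence in a monoid. -/
def HE {M : Type} [Monoid M] (s t : M) : Prop := RE s t ∧ LE' s t
/-- Green's J-equivalence in a monoid. -/
def JE {M : Type} [Monoid M] (s t : M) : Prop :=
  (∃ a b, a * s * b = t) ∧ (∃ a b, a * t * b = s)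

/-- Green's R-equivalence relative to a subset `S` (multipliers taken in `S`). -/
def REOn {M : Type} [Monoid M] (S : Set M) (s t : M) : Prop :=
  (∃ a ∈ S, s * a = t) ∧ (∃ a ∈ S, t * a = s)
def LEOn {M : Type} [Monoid M] (S : Set M) (s t : M) : Prop :=
  (∃ a ∈ S, a * s = t) ∧ (∃ a ∈ S, a * t = s)
def HEOn {M : Type} [Monoid M] (S : Set M) (s t : M) : Prop := REOn S s t ∧ LEOn S s t
def JEOn {M : Type} [Monoid M] (S : Set M) (s t : M) : Prop :=
  (∃ a ∈ S, ∃ b ∈ S, a * s * b = t) ∧ (∃ a ∈ S, ∃ b ∈ S, a * t * b = s)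

/-- The local monoid `C_c = C(c,c)`, viewed as a subset of the consolidation. -/
def locSet (C : FinCat Obj) (c : Obj) : Set (Cd C) :=
  {x | ∃ f : C.Arr, x = Cd.arr f ∧ C.src f = c ∧ C.tgt f = c}

/-- A quotient morphism of categories: identity on objects, surjective on arrows,
preserving sources, targets, identities and composition. -/
structure QuotMor (C D : FinCat Obj) where
  map : C.Arr → D.Arr
  map_src : ∀ f, D.src (map f) = C.src f
  map_tgt : ∀ f, D.tgt (map f) = C.tgt f
  map_id : ∀ a, map (C.id a) = D.id a
  map_comp : ∀ (f g : C.Arr) (h1 : C.tgt f = C.src g) (h2 : D.tgt (map f) = D.src (map g)),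
    map (C.comp f g h1) = D.comp (map f) (map g) h2
  surj : Function.Surjective map

/-- The induced map on consolidations: `φ` on arrows, `0 ↦ 0`, `1 ↦ 1`. -/
def cdMap {C D : FinCat Obj} (φ : QuotMor C D) : Cd C → Cd D
  | .zero => .zero
  | .one => .one
  | .arr f => .arr (φ.map f)

/-- A congruence on a category: an equivalence relation on arrows relating only
coterminal arrows and compatible with composition on both sides. -/
def IsCatCong (C : FinCat Obj) (ρ : C.Arr → C.Arr → Prop) : Prop :=
  Equivalence ρ ∧
  (∀ f g, ρ f g → C.src f = C.src g ∧ C.tgt f = C.tgt g) ∧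
  (∀ f g, ρ f g → ∀ (k : C.Arr) (h1 : C.tgt k = C.src f) (h2 : C.tgt k = C.src g),
    ρ (C.comp k f h1) (C.comp k g h2)) ∧
  (∀ f g, ρ f g → ∀ (k : C.Arr) (h1 : C.tgt f = C.src k) (h2 : C.tgt g = C.src k),
    ρ (C.comp f k h1) (C.comp g k h2))

/-- A monoid congruence: an equivalence relation compatible with multiplication. -/
def IsMonCong (M : Type) [Monoid M] (ρ : M → M → Prop) : Prop :=
  Equivalence ρ ∧ ∀ a b c d : M, ρ a b → ρ c d → ρ (a * c) (b * d)

/-- `ρ` is minimal among nontrivial congruences (w.r.t. the congruence predicate `Cong`). -/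
def IsMinNontriv {α : Type} (Cong : (α → α → Prop) → Prop) (ρ : α → α → Prop) : Prop :=
  Cong ρ ∧ (∃ a b : α, a ≠ b ∧ ρ a b) ∧
  ∀ σ : α → α → Prop, Cong σ → (∃ a b : α, a ≠ b ∧ σ a b) →
    (∀ a b, σ a b → ρ a b) → ∀ a b, ρ a b → σ a b

section Aux

variable {C D : FinCat Obj}

theorem arr_mul_arr (C : FinCat Obj) (f g : C.Arr) (h : C.tgt f = C.src g) :
    (Cd.arr f : Cd C) * Cd.arr g = Cd.arr (C.comp f g h) := by
  show dite _ _ _ = _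
  rw [dif_pos h]

theorem arr_mul_arr_zero (C : FinCat Obj) (f g : C.Arr) (h : ¬ C.tgt f = C.src g) :
    (Cd.arr f : Cd C) * Cd.arr g = Cd.zero := by
  show dite _ _ _ = _
  rw [dif_neg h]

theorem cdMap_mul (φ : QuotMor C D) (x y : Cd C) :
    cdMap φ (x * y) = cdMap φ x * cdMap φ y := by
  cases x <;> cases y <;> try rfl
  case arr.arr f g =>
    show cdMap φ (Cd.arr f * Cd.arr g) = Cd.arr (φ.map f) * Cd.arr (φ.map g)
    by_cases h : C.tgt f = C.src g
    · have h' : D.tgt (φ.map f) = D.src (φ.map g) := by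
        rw [φ.map_tgt, φ.map_src]; exact h
      rw [arr_mul_arr C f g h, arr_mul_arr D _ _ h']
      exact congrArg Cd.arr (φ.map_comp f g h h')
    · have h' : ¬ D.tgt (φ.map f) = D.src (φ.map g) := by
        rw [φ.map_tgt, φ.map_src]; exact h
      rw [arr_mul_arr_zero C f g h, arr_mul_arr_zero D _ _ h']
      rfl

theorem comp_congr (E : FinCat Obj) {f f' g g' : E.Arr} (hf : f = f') (hg : g = g')
    (h : E.tgt f = E.src g) (h' : E.tgt f' = E.src g') :
    E.comp f g h = E.comp f' g' h' := by
  subst hf; subst hg; rfl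

theorem catCong_rho (φ : QuotMor C D) :
    IsCatCong C (fun f g => φ.map f = φ.map g) := by
  refine ⟨⟨fun _ => rfl, Eq.symm, Eq.trans⟩, ?_, ?_, ?_⟩
  · intro f g h
    constructor
    · rw [← φ.map_src, ← φ.map_src, h]
    · rw [← φ.map_tgt, ← φ.map_tgt, h]
  · intro f g h k h1 h2
    have e1 : D.tgt (φ.map k) = D.src (φ.map f) := by rw [φ.map_tgt, φ.map_src]; exact h1
    have e2 : D.tgt (φ.map k) = D.src (φ.map g) := by rw [φ.map_tgt, φ.map_src]; exact h2
    rw [φ.map_comp k f h1 e1, φ.map_comp k g h2 e2]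
    exact comp_congr D rfl h e1 e2
  · intro f g h k h1 h2
    have e1 : D.tgt (φ.map f) = D.src (φ.map k) := by rw [φ.map_tgt, φ.map_src]; exact h1
    have e2 : D.tgt (φ.map g) = D.src (φ.map k) := by rw [φ.map_tgt, φ.map_src]; exact h2
    rw [φ.map_comp f k h1 e1, φ.map_comp g k h2 e2]
    exact comp_congr D h rfl e1 e2

theorem monCong_rho (φ : QuotMor C D) :
    IsMonCong (Cd C) (fun x y => cdMap φ x = cdMap φ y) := by
  refine ⟨⟨fun _ => rfl, Eq.symm, Eq.trans⟩, fun a b c d hab hcd => ?_⟩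
  show cdMap φ (a * c) = cdMap φ (b * d)
  rw [cdMap_mul, cdMap_mul]
  exact congrArg₂ _ hab hcd

theorem cdMap_eq_cases (φ : QuotMor C D) {x y : Cd C} (h : cdMap φ x = cdMap φ y) :
    x = y ∨ ∃ f g, x = Cd.arr f ∧ y = Cd.arr g ∧ φ.map f = φ.map g := by
  cases x <;> cases y <;> simp only [cdMap] at h <;>
    first
      | exact Or.inl rfl
      | cases h
      | skip
  case arr.arr f g => exact Or.inr ⟨f, g, rfl, rfl, Cd.arr.inj h⟩

end Aux

/-- the congruence of a quotient morphism `φ : C → D` is minimal among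
nontrivial category congruences on `C` iff the kernel congruence of `φ_cd : C^cd → D^cd`
is minimal among nontrivial monoid congruences on `C^cd`. -/
theorem stmt_14 (C D : FinCat Obj) [Fintype Obj] [Fintype C.Arr] [Fintype D.Arr]
    (φ : QuotMor C D) :
    IsMinNontriv (IsCatCong C) (fun f g => φ.map f = φ.map g) ↔
    IsMinNontriv (IsMonCong (Cd C)) (fun x y => cdMap φ x = cdMap φ y) := by
  constructor
  · rintro ⟨_, ⟨f, g, hfg, hρ⟩, hmin⟩
    refine ⟨monCong_rho φ, ⟨.arr f, .arr g, fun h => hfg (Cd.arr.inj h), congrArg Cd.arr hρ⟩, ?_⟩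
    intro σ hσ ⟨x, y, hxy, hσxy⟩ hsub
    -- restrict σ to arrows
    set σ' : C.Arr → C.Arr → Prop := fun f g => σ (.arr f) (.arr g) with hσ'def
    have hσ'cong : IsCatCong C σ' := by
      refine ⟨⟨fun _ => hσ.1.refl _, fun h => hσ.1.symm h, fun h h' => hσ.1.trans h h'⟩,
        ?_, ?_, ?_⟩
      · intro f g h
        have := hsub _ _ h
        simp only [cdMap] at this
        have hm : φ.map f = φ.map g := Cd.arr.inj this
        exact (catCong_rho φ).2.1 f g hm
      · intro f g h k h1 h2
        have := hσ.2 _ _ _ _ (hσ.1.refl (Cd.arr k)) h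
        rwa [arr_mul_arr C k f h1, arr_mul_arr C k g h2] at this
      · intro f g h k h1 h2
        have := hσ.2 _ _ _ _ h (hσ.1.refl (Cd.arr k))
        rwa [arr_mul_arr C f k h1, arr_mul_arr C g k h2] at this
    have hnt : ∃ f g : C.Arr, f ≠ g ∧ σ' f g := by
      rcases cdMap_eq_cases φ (hsub _ _ hσxy) with rfl | ⟨f, g, rfl, rfl, -⟩
      · exact absurd rfl hxy
      · exact ⟨f, g, fun h => hxy (congrArg Cd.arr h), hσxy⟩
    have hsub' : ∀ f g, σ' f g → φ.map f = φ.map g := by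
      intro f g h
      exact Cd.arr.inj (hsub _ _ h)
    have hback := hmin σ' hσ'cong hnt hsub'
    intro x y hxy'
    rcases cdMap_eq_cases φ hxy' with rfl | ⟨f, g, rfl, rfl, hm⟩
    · exact hσ.1.refl _
    · exact hback f g hm
  · rintro ⟨_, ⟨x, y, hxy, hρ⟩, hmin⟩
    have hnt : ∃ f g : C.Arr, f ≠ g ∧ φ.map f = φ.map g := by
      rcases cdMap_eq_cases φ hρ with rfl | ⟨f, g, rfl, rfl, hm⟩
      · exact absurd rfl hxy
      · exact ⟨f, g, fun h => hxy (congrArg Cd.arr h), hm⟩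
    refine ⟨catCong_rho φ, hnt, ?_⟩
    intro σ hσ ⟨f0, g0, hf0g0, hσ0⟩ hsub
    -- extend σ to the consolidation
    set σs : Cd C → Cd C → Prop :=
      fun x y => x = y ∨ ∃ f g, σ f g ∧ x = .arr f ∧ y = .arr g with hσsdef
    have hcot : ∀ f g, σ f g → C.src f = C.src g ∧ C.tgt f = C.tgt g := hσ.2.1
    have hmulcase : ∀ (f g k l : C.Arr), σ f g → σ k l →
        σs (Cd.arr f * Cd.arr k) (Cd.arr g * Cd.arr l) := by
      intro f g k l hfg hkl
      obtain ⟨-, htfg⟩ := hcot f g hfg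
      obtain ⟨hskl, -⟩ := hcot k l hkl
      by_cases h : C.tgt f = C.src k
      · have h' : C.tgt g = C.src l := by rw [← htfg, ← hskl]; exact h
        rw [arr_mul_arr C f k h, arr_mul_arr C g l h']
        refine Or.inr ⟨_, _, ?_, rfl, rfl⟩
        have s1 : σ (C.comp f k h) (C.comp f l (htfg ▸ h')) :=
          hσ.2.2.1 k l hkl f h _
        have s2 : σ (C.comp f l (htfg ▸ h')) (C.comp g l h') :=
          hσ.2.2.2 f g hfg l _ h'
        exact hσ.1.trans s1 s2
      · have h' : ¬ C.tgt g = C.src l := by rw [← htfg, ← hskl]; exact h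
        rw [arr_mul_arr_zero C f k h, arr_mul_arr_zero C g l h']
        exact Or.inl rfl
    have hσscong : IsMonCong (Cd C) σs := by
      refine ⟨⟨fun _ => Or.inl rfl, ?_, ?_⟩, ?_⟩
      · rintro x y (rfl | ⟨f, g, hfg, rfl, rfl⟩)
        · exact Or.inl rfl
        · exact Or.inr ⟨g, f, hσ.1.symm hfg, rfl, rfl⟩
      · rintro x y z (rfl | ⟨f, g, hfg, rfl, rfl⟩) h2
        · exact h2
        · rcases h2 with h2 | ⟨g', k, hgk, hg, rfl⟩
          · exact Or.inr ⟨f, g, hfg, rfl, h2.symm⟩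
          · cases Cd.arr.inj hg
            exact Or.inr ⟨f, k, hσ.1.trans hfg hgk, rfl, rfl⟩
      · rintro a b c d (rfl | ⟨f, g, hfg, rfl, rfl⟩) (rfl | ⟨k, l, hkl, rfl, rfl⟩)
        · exact Or.inl rfl
        · -- a = b, multiply σ k l on the right by a
          cases a with
          | zero => exact Or.inl rfl
          | one => exact Or.inr ⟨k, l, hkl, rfl, rfl⟩
          | arr f => exact hmulcase f f k l (hσ.1.refl f) hkl
        · -- c = d, multiply σ f g on the left by c
          cases c with
          | zero =>
            rw [show (Cd.arr f : Cd C) * Cd.zero = Cd.zero from rfl,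
              show (Cd.arr g : Cd C) * Cd.zero = Cd.zero from rfl]
            exact Or.inl rfl
          | one =>
            exact Or.inr ⟨f, g, hfg, rfl, rfl⟩
          | arr k => exact hmulcase f g k k hfg (hσ.1.refl k)
        · exact hmulcase f g k l hfg hkl
    have hsnt : ∃ x y : Cd C, x ≠ y ∧ σs x y :=
      ⟨.arr f0, .arr g0, fun h => hf0g0 (Cd.arr.inj h), Or.inr ⟨f0, g0, hσ0, rfl, rfl⟩⟩
    have hssub : ∀ x y, σs x y → cdMap φ x = cdMap φ y := by
      rintro x y (rfl | ⟨f, g, hfg, rfl, rfl⟩)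
      · rfl
      · exact congrArg Cd.arr (hsub f g hfg)
    have hback := hmin σs hσscong hsnt hssub
    intro f g hfg
    have := hback (.arr f) (.arr g) (congrArg Cd.arr hfg)
    rcases this with h | ⟨f', g', hσ', hf, hg⟩
    · cases Cd.arr.inj h
      exact hσ.1.refl f
    · cases Cd.arr.inj hf
      cases Cd.arr.inj hg
      exact hσ'
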